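/- Let t < 0 and let y be a real number with y ≠ 0 and π/t < y < −π/t. Then 1/4 − y² − y·cot(ty) ≥ 0 if and only if |f_t(y)| ≤ 1. -/

import Mathlib

/-- For `t < 0`, `f_t(y) := 2y·sin(ty) + cos(ty)`. -/
noncomputable def fMap (t y : ℝ) : ℝ :=
  2 * y * Real.sin (t * y) + Real.cos (t * y)

/-- let `t < 0` and `y ≠ 0` with `π/t < y < −π/t`. Then
`1/4 − y² − y·cot(ty) ≥ 0` iff `|f_t(y)| ≤ 1`. -/
theorem quarter_sub_nonneg_iff_abs_fMap_le_one (t y : ℝ) (ht : t < 0) (hy : y ≠ 0)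
    (h1 : Real.pi / t < y) (h2 : y < -Real.pi / t) :
    0 ≤ 1 / 4 - y ^ 2 - y * Real.cot (t * y) ↔ |fMap t y| ≤ 1 := by
  have hlt : t * y < Real.pi := by
    rw [div_lt_iff_of_neg ht] at h1
    linarith [h1]
  have hgt : -Real.pi < t * y := by
    rw [lt_div_iff_of_neg ht] at h2
    linarith [h2]
  have hne : t * y ≠ 0 := mul_ne_zero (ne_of_lt ht) hy
  have hs : Real.sin (t * y) ≠ 0 := by
    rcases lt_or_gt_of_ne hne with h | h
    · have : 0 < Real.sin (-(t * y)) :=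
        Real.sin_pos_of_pos_of_lt_pi (by linarith) (by linarith)
      rw [Real.sin_neg] at this
      linarith
    · have : 0 < Real.sin (t * y) := Real.sin_pos_of_pos_of_lt_pi h hlt
      linarith
  have hs2 : 0 < Real.sin (t * y) ^ 2 := by positivity
  have hpy : Real.sin (t * y) ^ 2 + Real.cos (t * y) ^ 2 = 1 := Real.sin_sq_add_cos_sq _
  rw [Real.cot_eq_cos_div_sin, ← mul_nonneg_iff_of_pos_right hs2,
    abs_le_one_iff_mul_self_le_one]
  unfold fMap
  set s := Real.sin (t * y)
  set c := Real.cos (t * y)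
  have key : (1 / 4 - y ^ 2 - y * (c / s)) * s ^ 2
      = (1 / 4 - y ^ 2) * s ^ 2 - y * c * s := by
    field_simp
  rw [key]
  constructor
  · intro h
    nlinarith [h, hpy]
  · intro h
    nlinarith [h, hpy]
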